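/- Fix y ∈ ℝⁿ and let z̃ ∈ ℝⁿ be a global minimizer over z ∈ ℝⁿ of z ↦ C^{1/2}_{λ,μ}(z, y). Then for every index i, if |[B_μ(y)]_i| < t_{1/2, λ_i} where λ_i = λμ/(|y_i| + ε_i)^{1/2 − p} and t_{1/2,λ_i} = (54^{1/3}/4)·λ_i^{2/3}, then z̃_i = 0. -/

import Mathlib

/-- `B_μ(y) = y + μ·Aᵀ(b − Ay)`. -/
noncomputable def Bmu {m n : ℕ} (A : Matrix (Fin m) (Fin n) ℝ) (b : Fin m → ℝ)
    (μ : ℝ) (y : Fin n → ℝ) : Fin n → ℝ :=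
  y + μ • (A.transpose.mulVec (b - A.mulVec y))

/-- The objective `C^θ_λ(z) = ‖Az − b‖₂² + λ·Σᵢ |zᵢ|^θ/(|zᵢ| + εᵢ)^{θ−p}`. -/
noncomputable def Cobj {m n : ℕ} (A : Matrix (Fin m) (Fin n) ℝ) (b : Fin m → ℝ)
    (lam p θ : ℝ) (ε : Fin n → ℝ) (z : Fin n → ℝ) : ℝ :=
  ∑ j, ((A.mulVec z - b) j) ^ 2 +
    lam * ∑ i, |z i| ^ θ / (|z i| + ε i) ^ (θ - p)

/-- The surrogate functional
`C^θ_{λ,μ}(z,y) = μ‖Az − b‖₂² + λμ·Σᵢ |zᵢ|^θ/(|yᵢ| + εᵢ)^{θ−p} − μ‖Az − Ay‖₂² + ‖z − y‖₂²`. -/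
noncomputable def Csur {m n : ℕ} (A : Matrix (Fin m) (Fin n) ℝ) (b : Fin m → ℝ)
    (lam μ p θ : ℝ) (ε : Fin n → ℝ) (z y : Fin n → ℝ) : ℝ :=
  μ * ∑ j, ((A.mulVec z - b) j) ^ 2 +
    lam * μ * ∑ i, |z i| ^ θ / (|y i| + ε i) ^ (θ - p) -
    μ * ∑ j, ((A.mulVec z - A.mulVec y) j) ^ 2 +
    ∑ i, (z i - y i) ^ 2

/-- The half-thresholding function `f_{1/2,λ}`. -/
noncomputable def f12 (lam r : ℝ) : ℝ :=
  (2 / 3) * r *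
    (1 + Real.cos (2 * Real.pi / 3 -
      (2 / 3) * Real.arccos ((lam / 8) * (|r| / 3) ^ (-(3 : ℝ) / 2))))

/-- The threshold value `t_{1/2,λ} = (54^{1/3}/4)·λ^{2/3}`. -/
noncomputable def t12 (lam : ℝ) : ℝ :=
  (54 : ℝ) ^ ((1 : ℝ) / 3) / 4 * lam ^ ((2 : ℝ) / 3)

/-! Up to a constant depending only on `y`, the surrogate `z ↦ C^{1/2}_{λ,μ}(z, y)` is the separable
sum `∑ᵢ (zᵢ − B_μ(y)ᵢ)² + λᵢ |zᵢ|^{1/2}`, so a global minimizer minimizes every summand. If some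
`zᵢ ≠ 0` does no worse than `0` in its summand, then `s = |zᵢ|^{1/2} > 0` satisfies
`s³ + λᵢ ≤ 2 |B_μ(y)ᵢ| s`; cubing and AM–GM, `(s³ + λᵢ)³ ≥ (27/4) λᵢ² s³`, give
`|B_μ(y)ᵢ|³ ≥ 27 λᵢ² / 32 = t_{1/2,λᵢ}³`. -/

open scoped Matrix

theorem apply_le_of_forall_sum_le {ι α β : Type*} [Fintype ι] [AddCommMonoid β] [PartialOrder β]
    [IsOrderedCancelAddMonoid β] (f : ι → α → β) {x : ι → α}
    (h : ∀ z : ι → α, ∑ j, f j (x j) ≤ ∑ j, f j (z j)) (i : ι) (t : α) : f i (x i) ≤ f i t := by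
  classical
  have hupd := h (Function.update x i t)
  rw [← Finset.add_sum_erase _ _ (Finset.mem_univ i), ← Finset.sdiff_singleton_eq_erase] at hupd
  simp only [Function.apply_update f x i t, Finset.sum_update_of_mem (Finset.mem_univ i)] at hupd
  exact le_of_add_le_add_right hupd

/-- AM–GM for `x/2, x/2, c`, in the form `(x − c/2)²(x + 4c) ≥ 0`. -/
theorem mul_sq_mul_le_add_pow_three {x c : ℝ} (hx : 0 ≤ x) (hc : 0 ≤ c) :
    27 / 4 * c ^ 2 * x ≤ (x + c) ^ 3 := by
  nlinarith [mul_nonneg (sq_nonneg (x - c / 2)) (by positivity : 0 ≤ x + 4 * c)]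

theorem t12_pow_three {c : ℝ} (hc : 0 ≤ c) : t12 c ^ 3 = 27 / 32 * c ^ 2 := by
  rw [t12, mul_pow, div_pow, ← Real.rpow_natCast ((54 : ℝ) ^ ((1 : ℝ) / 3)) 3,
    ← Real.rpow_natCast (c ^ ((2 : ℝ) / 3)) 3, ← Real.rpow_mul (by norm_num),
    ← Real.rpow_mul hc]
  norm_num

noncomputable def penalizedSq (θ c B t : ℝ) : ℝ :=
  (t - B) ^ 2 + c * |t| ^ θ

theorem eq_zero_of_penalizedSq_half_le {c B t : ℝ} (hc : 0 ≤ c) (hB : |B| < t12 c)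
    (h : penalizedSq (1 / 2) c B t ≤ penalizedSq (1 / 2) c B 0) : t = 0 := by
  by_contra ht
  set s := √|t|
  have hs : 0 < s := Real.sqrt_pos.mpr (abs_pos.mpr ht)
  have hs_sq : s ^ 2 = |t| := Real.sq_sqrt (abs_nonneg t)
  have hBt : B * t ≤ |B| * s ^ 2 := hs_sq ▸ (le_abs_self _).trans (abs_mul B t).le
  rw [penalizedSq, penalizedSq, ← Real.sqrt_eq_rpow, abs_zero,
    Real.zero_rpow (by norm_num)] at h
  have hcubic : s ^ 3 + c ≤ 2 * |B| * s := by
    have : s * (s ^ 3 + c) ≤ s * (2 * |B| * s) := by nlinarith [sq_abs t]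
    exact le_of_mul_le_mul_left this hs
  have hB3 : |B| ^ 3 < 27 / 32 * c ^ 2 :=
    t12_pow_three hc ▸ pow_lt_pow_left₀ hB (abs_nonneg B) three_ne_zero
  have hs3 : 0 < s ^ 3 := by positivity
  have hcube : (s ^ 3 + c) ^ 3 ≤ (2 * |B| * s) ^ 3 := pow_le_pow_left₀ (by positivity) hcubic 3
  nlinarith [mul_sq_mul_le_add_pow_three hs3.le hc, mul_lt_mul_of_pos_right hB3 hs3]

/-- Expanding `‖Az − b‖² − ‖Az − Ay‖²` leaves only a term linear in `z`, which the adjoint turns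
into `⟨z − y, Aᵀ(b − Ay)⟩`; completing the square around `B_μ(y)` then separates the variables. -/
theorem Csur_eq_sum_penalizedSq_add {m n : ℕ} (A : Matrix (Fin m) (Fin n) ℝ) (b : Fin m → ℝ)
    (lam μ p θ : ℝ) (ε : Fin n → ℝ) (z y : Fin n → ℝ) :
    Csur A b lam μ p θ ε z y =
      ∑ j, penalizedSq θ (lam * μ / (|y j| + ε j) ^ (θ - p)) (Bmu A b μ y j) (z j) +
        (μ * ∑ k, (b - A *ᵥ y) k ^ 2 - μ ^ 2 * ∑ j, (Aᵀ *ᵥ (b - A *ᵥ y)) j ^ 2) := by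
  simp only [Csur, penalizedSq, Bmu, Pi.add_apply, Pi.smul_apply, smul_eq_mul]
  set r := b - A *ᵥ y
  set g := Aᵀ *ᵥ r
  set u := A *ᵥ z - A *ᵥ y with hu
  have hadj : ∑ k, r k * u k = ∑ j, g j * (z j - y j) := by
    change r ⬝ᵥ u = g ⬝ᵥ (z - y)
    rw [hu, ← Matrix.mulVec_sub, Matrix.dotProduct_mulVec, ← Matrix.mulVec_transpose]
  have hres : ∑ k, (A *ᵥ z - b) k ^ 2 = ∑ k, u k ^ 2 - 2 * ∑ k, r k * u k + ∑ k, r k ^ 2 := by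
    rw [Finset.mul_sum, ← Finset.sum_sub_distrib, ← Finset.sum_add_distrib]
    exact Finset.sum_congr rfl fun k _ => by simp only [u, r, Pi.sub_apply]; ring
  have hsq : ∑ j, ((z j - (y j + μ * g j)) ^ 2 + lam * μ / (|y j| + ε j) ^ (θ - p) * |z j| ^ θ) =
      ∑ j, (z j - y j) ^ 2 - 2 * μ * ∑ j, g j * (z j - y j) + μ ^ 2 * ∑ j, g j ^ 2 +
        lam * μ * ∑ j, |z j| ^ θ / (|y j| + ε j) ^ (θ - p) := by
    simp only [Finset.mul_sum, ← Finset.sum_sub_distrib, ← Finset.sum_add_distrib]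
    exact Finset.sum_congr rfl fun j _ => by ring
  rw [hres, hsq, hadj]
  ring

theorem stmt_6_general {m n : ℕ} (A : Matrix (Fin m) (Fin n) ℝ) (b : Fin m → ℝ)
    (lam μ p : ℝ) (ε : Fin n → ℝ)
    (hlam : 0 < lam) (hμ : 0 < μ)
    (hε : ∀ i, 0 < ε i) (y : Fin n → ℝ) (ztilde : Fin n → ℝ)
    (hmin : ∀ z : Fin n → ℝ,
      Csur A b lam μ p ((1 : ℝ) / 2) ε ztilde y ≤ Csur A b lam μ p ((1 : ℝ) / 2) ε z y) :
    ∀ i : Fin n,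
      |Bmu A b μ y i| < t12 (lam * μ / (|y i| + ε i) ^ ((1 : ℝ) / 2 - p)) →
        ztilde i = 0 := by
  intro i hi
  have hc : 0 ≤ lam * μ / (|y i| + ε i) ^ ((1 : ℝ) / 2 - p) := by
    have := hε i
    positivity
  refine eq_zero_of_penalizedSq_half_le hc hi ?_
  refine apply_le_of_forall_sum_le (fun j => penalizedSq (1 / 2)
    (lam * μ / (|y j| + ε j) ^ ((1 : ℝ) / 2 - p)) (Bmu A b μ y j)) (fun z => ?_) i 0
  have hz := hmin z
  rw [Csur_eq_sum_penalizedSq_add, Csur_eq_sum_penalizedSq_add] at hz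
  linarith

theorem stmt_6 {m n : ℕ} (A : Matrix (Fin m) (Fin n) ℝ) (b : Fin m → ℝ)
    (lam μ p : ℝ) (ε : Fin n → ℝ)
    (hlam : 0 < lam) (hμ : 0 < μ) (hp : p ∈ Set.Ioo (0 : ℝ) 1)
    (hε : ∀ i, 0 < ε i) (y : Fin n → ℝ) (ztilde : Fin n → ℝ)
    (hmin : ∀ z : Fin n → ℝ,
      Csur A b lam μ p ((1 : ℝ) / 2) ε ztilde y ≤ Csur A b lam μ p ((1 : ℝ) / 2) ε z y) :
    ∀ i : Fin n,
      |Bmu A b μ y i| < t12 (lam * μ / (|y i| + ε i) ^ ((1 : ℝ) / 2 - p)) →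
        ztilde i = 0 :=
  stmt_6_general A b lam μ p ε hlam hμ hε y ztilde hmin
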